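/- arXiv:1705.06999 — 2 statements merged into one kernel-verified Lean document; each statement's English description precedes it below -/
import Mathlib

section
/- Let u, v : Ω → ℝ be smooth with v₁ vanishing nowhere on Ω. If u₂·v₁ − u₁·v₂ = v₁·v₂ and u₄·v₁ − u₁·v₄ = v₁·v₃ hold identically on Ω, then ∂₃(v₂/v₁) = ∂₂(v₄/v₁) on Ω. -/
/-!
Differentiate the first equation in `x⁴` and the second in `x²` and subtract, so that `u₂₄`
cancels. The `x¹`-derivatives of the two equations then eliminate `u₁₂` and `u₁₄` (the `u₁₁`
terms cancel against each other), and the first-order `u`-terms left over are multiples of the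
equations themselves. What remains is `∂₃(v₂/v₁) = ∂₂(v₄/v₁)` multiplied by `v₁⁴`.
In Lean the coordinates `x¹, …, x⁴` carry the indices `0, …, 3`.
-/

/-- Partial derivative of `F : ℝ⁴ → ℝ` in the `i`-th coordinate direction. -/
noncomputable def pd (i : Fin 4) (F : (Fin 4 → ℝ) → ℝ) : (Fin 4 → ℝ) → ℝ :=
  fun x => fderiv ℝ F x (Pi.single i 1)

open Set

section

variable {Ω : Set (Fin 4 → ℝ)} {f g : (Fin 4 → ℝ) → ℝ} {x : Fin 4 → ℝ} {i : Fin 4}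

theorem Set.EqOn.pd_eq (hΩ : IsOpen Ω) (h : EqOn f g Ω) (hx : x ∈ Ω) (i : Fin 4) :
    pd i f x = pd i g x := by
  simp only [pd, (h.eventuallyEq_of_mem (hΩ.mem_nhds hx)).fderiv_eq]

theorem pd_sub (hf : DifferentiableAt ℝ f x) (hg : DifferentiableAt ℝ g x) :
    pd i (fun y => f y - g y) x = pd i f x - pd i g x := by
  simp [pd, fderiv_fun_sub hf hg]

theorem pd_mul (hf : DifferentiableAt ℝ f x) (hg : DifferentiableAt ℝ g x) :
    pd i (fun y => f y * g y) x = pd i f x * g x + f x * pd i g x := by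
  simp only [pd, fderiv_fun_mul hf hg, add_apply, smul_apply, smul_eq_mul]
  ring

theorem pd_div (hf : DifferentiableAt ℝ f x) (hg : DifferentiableAt ℝ g x) (hgx : g x ≠ 0) :
    pd i (fun y => f y / g y) x = (pd i f x * g x - f x * pd i g x) / g x ^ 2 := by
  have hinv : HasFDerivAt (fun y => (g y)⁻¹) (-(g x ^ 2)⁻¹ • fderiv ℝ g x) x :=
    (hasDerivAt_inv hgx).comp_hasFDerivAt x hg.hasFDerivAt
  simp only [div_eq_mul_inv, pd_mul hf hinv.differentiableAt]
  simp only [pd, hinv.fderiv, smul_apply, smul_eq_mul]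
  field_simp
  ring

theorem ContDiffAt.differentiableAt_pd (hf : ContDiffAt ℝ 2 f x) (i : Fin 4) :
    DifferentiableAt ℝ (pd i f) x :=
  ((hf.fderiv_right (m := 1) le_rfl).differentiableAt one_ne_zero).clm_apply
    (differentiableAt_const _)

theorem pd_comm (hf : ContDiffAt ℝ 2 f x) (i j : Fin 4) :
    pd i (pd j f) x = pd j (pd i f) x := by
  have hdf : DifferentiableAt ℝ (fderiv ℝ f) x :=
    (hf.fderiv_right (m := 1) le_rfl).differentiableAt one_ne_zero
  unfold pd
  simp only [fderiv_clm_apply hdf (differentiableAt_const _), fderiv_fun_const, Pi.zero_apply,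
    ContinuousLinearMap.comp_zero, zero_add, ContinuousLinearMap.flip_apply]
  exact (hf.isSymmSndFDerivAt (by simp)).eq _ _

end

/-- Elimination of `u` from the Segre type [211] system `u₂v₁ − u₁v₂ = v₁v₂`,
`u₄v₁ − u₁v₄ = v₁v₃` yields `∂₃(v₂/v₁) = ∂₂(v₄/v₁)`.
Coordinates `x¹,…,x⁴` are indexed by `0,…,3`. -/
theorem statement3 (Ω : Set (Fin 4 → ℝ)) (hΩ : IsOpen Ω)
    (u v : (Fin 4 → ℝ) → ℝ)
    (hu : ContDiffOn ℝ (⊤ : ℕ∞) u Ω) (hv : ContDiffOn ℝ (⊤ : ℕ∞) v Ω)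
    (hv1 : ∀ x ∈ Ω, pd 0 v x ≠ 0)
    (heq1 : ∀ x ∈ Ω, pd 1 u x * pd 0 v x - pd 0 u x * pd 1 v x = pd 0 v x * pd 1 v x)
    (heq2 : ∀ x ∈ Ω, pd 3 u x * pd 0 v x - pd 0 u x * pd 3 v x = pd 0 v x * pd 2 v x) :
    ∀ x ∈ Ω,
      pd 2 (fun y => pd 1 v y / pd 0 v y) x = pd 1 (fun y => pd 3 v y / pd 0 v y) x := by
  intro x hx
  have hu2 : ContDiffAt ℝ 2 u x :=
    (hu.contDiffAt (hΩ.mem_nhds hx)).of_le (WithTop.coe_le_coe.mpr le_top)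
  have hv2 : ContDiffAt ℝ 2 v x :=
    (hv.contDiffAt (hΩ.mem_nhds hx)).of_le (WithTop.coe_le_coe.mpr le_top)
  have hdu := hu2.differentiableAt_pd
  have hdv := hv2.differentiableAt_pd
  have hu_comm (i j : Fin 4) (_ : j < i) : pd i (pd j u) x = pd j (pd i u) x := pd_comm hu2 i j
  have hv_comm (i j : Fin 4) (_ : j < i) : pd i (pd j v) x = pd j (pd i v) x := pd_comm hv2 i j
  have heq1_d3 := EqOn.pd_eq hΩ (fun y hy => heq1 y hy) hx 3
  have heq1_d0 := EqOn.pd_eq hΩ (fun y hy => heq1 y hy) hx 0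
  have heq2_d1 := EqOn.pd_eq hΩ (fun y hy => heq2 y hy) hx 1
  have heq2_d0 := EqOn.pd_eq hΩ (fun y hy => heq2 y hy) hx 0
  simp (disch := fun_prop) only [pd_sub, pd_mul] at heq1_d3 heq1_d0 heq2_d1 heq2_d0
  have hv0 := hv1 x hx
  rw [pd_div (hdv 1) (hdv 0) hv0, pd_div (hdv 3) (hdv 0) hv0,
    div_eq_div_iff (pow_ne_zero 2 hv0) (pow_ne_zero 2 hv0)]
  simp (disch := decide) only [hu_comm, hv_comm] at heq1_d3 heq1_d0 heq2_d1 heq2_d0 ⊢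
  linear_combination
    pd 0 v x ^ 2 * (heq1_d3 - heq2_d1) + pd 0 v x * (pd 1 v x * heq2_d0 - pd 3 v x * heq1_d0)
      + (pd 0 (pd 0 v) x * pd 3 v x - pd 0 v x * pd 0 (pd 3 v) x) * heq1 x hx
      + (pd 0 v x * pd 0 (pd 1 v) x - pd 0 (pd 0 v) x * pd 1 v x) * heq2 x hx
end

section
/- Let u, v : Ω → ℝ be smooth. If u₃ = v₂ − v₁·v₃ and u₄ = v₃ − v₁·v₄ hold identically on Ω, then v satisfies the second-order equation v₂₄ − v₃₃ = v₃·v₁₄ − v₄·v₁₃ on Ω. -/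
open Filter Topology

variable {i j : Fin 4} {F G H : (Fin 4 → ℝ) → ℝ} {x : Fin 4 → ℝ}

lemma pd_congr_of_eventuallyEq (h : F =ᶠ[𝓝 x] G) : pd i F x = pd i G x := by
  simp only [pd, h.fderiv_eq]

lemma ContDiffAt.pd {n : WithTop ℕ∞} (h : ContDiffAt ℝ (n + 1) F x) :
    ContDiffAt ℝ n (pd i F) x :=
  (ContinuousLinearMap.apply ℝ ℝ (Pi.single i 1 : Fin 4 → ℝ)).contDiff.contDiffAt.comp x
    (h.fderiv_right le_rfl)

lemma pd_fun_sub (hF : DifferentiableAt ℝ F x) (hG : DifferentiableAt ℝ G x) :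
    pd i (fun y => F y - G y) x = pd i F x - pd i G x := by
  simp [pd, fderiv_fun_sub hF hG]

lemma pd_fun_mul (hF : DifferentiableAt ℝ F x) (hG : DifferentiableAt ℝ G x) :
    pd i (fun y => F y * G y) x = pd i F x * G x + F x * pd i G x := by
  simp only [pd, fderiv_fun_mul hF hG, add_apply, smul_apply, smul_eq_mul]
  ring

lemma pd_pd_eq_fderiv_fderiv (h : ContDiffAt ℝ 2 F x) :
    pd i (pd j F) x = fderiv ℝ (fderiv ℝ F) x (Pi.single i 1) (Pi.single j 1) := by
  have hdiff : DifferentiableAt ℝ (fderiv ℝ F) x :=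
    (h.fderiv_right (m := 1) le_rfl).differentiableAt one_ne_zero
  change fderiv ℝ (fun y => fderiv ℝ F y (Pi.single j 1)) x (Pi.single i 1) = _
  simp [fderiv_clm_apply hdiff (differentiableAt_const _)]

lemma pd_pd_comm (h : ContDiffAt ℝ 2 F x) : pd i (pd j F) x = pd j (pd i F) x := by
  rw [pd_pd_eq_fderiv_fderiv h, pd_pd_eq_fderiv_fderiv h]
  exact h.isSymmSndFDerivAt (by simp [minSmoothness_of_isRCLikeNormedField]) _ _

lemma pd_comm_of_pd_eventuallyEq (hF : ContDiffAt ℝ 2 F x)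
    (hG : pd i F =ᶠ[𝓝 x] G) (hH : pd j F =ᶠ[𝓝 x] H) : pd j G x = pd i H x := by
  rw [← pd_congr_of_eventuallyEq hG, ← pd_congr_of_eventuallyEq hH, pd_pd_comm hF]

/-- Elimination of `u` from the Segre type [3] system `u₃ = v₂ − v₁v₃`, `u₄ = v₃ − v₁v₄`
yields `v₂₄ − v₃₃ = v₃v₁₄ − v₄v₁₃`.  Coordinates `x¹,…,x⁴` are indexed by `0,…,3`. -/
theorem statement11 (Ω : Set (Fin 4 → ℝ)) (hΩ : IsOpen Ω)
    (u v : (Fin 4 → ℝ) → ℝ)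
    (hu : ContDiffOn ℝ (⊤ : ℕ∞) u Ω) (hv : ContDiffOn ℝ (⊤ : ℕ∞) v Ω)
    (heq1 : ∀ x ∈ Ω, pd 2 u x = pd 1 v x - pd 0 v x * pd 2 v x)
    (heq2 : ∀ x ∈ Ω, pd 3 u x = pd 2 v x - pd 0 v x * pd 3 v x) :
    ∀ x ∈ Ω,
      pd 3 (pd 1 v) x - pd 2 (pd 2 v) x
        = pd 2 v x * pd 3 (pd 0 v) x - pd 3 v x * pd 2 (pd 0 v) x := by
  intro x hx
  have hxΩ : Ω ∈ 𝓝 x := hΩ.mem_nhds hx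
  have hu2 : ContDiffAt ℝ 2 u x := (hu.contDiffAt hxΩ).of_le (by norm_cast)
  have hv2 : ContDiffAt ℝ 2 v x := (hv.contDiffAt hxΩ).of_le (by norm_cast)
  have hdv (k : Fin 4) : DifferentiableAt ℝ (pd k v) x :=
    (hv2.pd (n := 1)).differentiableAt one_ne_zero
  have compat := pd_comm_of_pd_eventuallyEq hu2
    (eventually_of_mem hxΩ heq1) (eventually_of_mem hxΩ heq2)
  rw [pd_fun_sub (hdv 1) ((hdv 0).fun_mul (hdv 2)), pd_fun_mul (hdv 0) (hdv 2),
    pd_fun_sub (hdv 2) ((hdv 0).fun_mul (hdv 3)), pd_fun_mul (hdv 0) (hdv 3),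
    pd_pd_comm (i := 3) (j := 2) hv2] at compat
  linarith
end
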